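/- arXiv:1511.02165 — 4 statements merged into one kernel-verified Lean document; each statement's English description precedes it below -/
import Mathlib

section
/- Let a > 0 and let u be a solution with initial value a on [0,∞). Then for every r ≥ 0, u(r) ≥ a + (φ(a)/(2m))·r². In particular, if φ(a) > 0 then u(r) → ∞ as r → ∞. -/
open MeasureTheory Real Filter Set
open scoped ENNReal Topology

noncomputable section

/-- The interval [0, R) for an extended-real radius `R`. -/
def odeDom (R : ℝ≥0∞) : Set ℝ := {r : ℝ | 0 ≤ r ∧ ENNReal.ofReal r < R}

/-- `u` is a solution with initial value `a` on `[0, R)` of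
u'' + ((m-1)/r) u' = φ(u), u(0) = a, u'(0) = 0, with `u` nonnegative and C². -/
def IsSolOn (m : ℝ) (φ : ℝ → ℝ) (a : ℝ) (R : ℝ≥0∞) (u : ℝ → ℝ) : Prop :=
  ContDiffOn ℝ 2 u (odeDom R) ∧
  (∀ r ∈ odeDom R, 0 ≤ u r) ∧
  u 0 = a ∧
  derivWithin u (Set.Ici 0) 0 = 0 ∧
  ∀ r : ℝ, 0 < r → ENNReal.ofReal r < R →
    deriv (deriv u) r + ((m - 1) / r) * deriv u r = φ (u r)

/-! Multiplying the equation by the integrating factor `r ^ (m - 1)` gives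
`(r ^ (m - 1) u')' = r ^ (m - 1) φ(u) ≥ 0` with `u'(0) = 0`, so `u` is nondecreasing and
`φ(u) ≥ φ(a)`. Integrating once more, `r ^ (m - 1) u' ≥ φ(a) r ^ m / m`, i.e. `u' ≥ φ(a) r / m`,
and a last integration gives `u ≥ a + φ(a) r ^ 2 / (2 m)`. -/

theorem le_of_hasDerivAt_le_of_le_Ici {f g f' g' : ℝ → ℝ} {x₀ : ℝ}
    (hf : ContinuousOn f (Ici x₀)) (hg : ContinuousOn g (Ici x₀))
    (hf' : ∀ x, x₀ < x → HasDerivAt f (f' x) x) (hg' : ∀ x, x₀ < x → HasDerivAt g (g' x) x)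
    (h₀ : f x₀ ≤ g x₀) (hle : ∀ x, x₀ < x → f' x ≤ g' x) {x : ℝ} (hx : x₀ ≤ x) :
    f x ≤ g x := by
  have hderiv : ∀ y ∈ interior (Ici x₀), HasDerivAt (g - f) (g' y - f' y) y := by
    rw [interior_Ici]
    exact fun y hy => (hg' y hy).sub (hf' y hy)
  have hmono : MonotoneOn (g - f) (Ici x₀) :=
    monotoneOn_of_deriv_nonneg (convex_Ici x₀) (hg.sub hf)
      (fun y hy => (hderiv y hy).differentiableAt.differentiableWithinAt)
      (fun y hy => (hderiv y hy).deriv ▸ sub_nonneg.2 (hle y (by simpa using hy)))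
  have := hmono self_mem_Ici hx hx
  simp only [Pi.sub_apply] at this
  linarith

theorem hasDerivAt_rpow_mul_of_radial {m r : ℝ} {v g : ℝ → ℝ} (hr : 0 < r)
    (hv : HasDerivAt v (g r - (m - 1) / r * v r) r) :
    HasDerivAt (fun x => x ^ (m - 1) * v x) (r ^ (m - 1) * g r) r := by
  refine ((hasDerivAt_rpow_const (p := m - 1) (Or.inl hr.ne')).mul hv).congr_deriv ?_
  rw [rpow_sub_one hr.ne']
  field_simp
  ring

theorem mul_div_le_of_radial {m c : ℝ} {v g : ℝ → ℝ} (hm : 1 < m)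
    (hv : ContinuousOn v (Ici 0)) (hv₀ : v 0 = 0)
    (hv' : ∀ r, 0 < r → HasDerivAt v (g r - (m - 1) / r * v r) r)
    (hg : ∀ r, 0 < r → c ≤ g r) {r : ℝ} (hr : 0 < r) :
    c * r / m ≤ v r := by
  have hm₀ : 0 < m := by linarith
  have hw : r ^ m * c / m ≤ r ^ (m - 1) * v r := by
    refine le_of_hasDerivAt_le_of_le_Ici (f := fun x => x ^ m * c / m)
      (f' := fun x => x ^ (m - 1) * c) (g' := fun x => x ^ (m - 1) * g x) ?_ ?_ ?_
      (fun x hx => hasDerivAt_rpow_mul_of_radial hx (hv' x hx)) ?_ ?_ hr.le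
    · exact (((continuous_rpow_const hm₀.le).mul continuous_const).div_const m).continuousOn
    · exact ((continuous_rpow_const (by linarith)).continuousOn).mul hv
    · intro x hx
      refine (((hasDerivAt_rpow_const (Or.inl hx.ne')).mul_const c).div_const m).congr_deriv ?_
      field_simp
    · simp [zero_rpow hm₀.ne', zero_rpow (sub_pos.2 hm).ne', hv₀]
    · exact fun x hx => mul_le_mul_of_nonneg_left (hg x hx) (rpow_nonneg hx.le _)
  have hrm : r ^ m * c / m = r ^ (m - 1) * (c * r / m) := by
    rw [rpow_sub_one hr.ne']
    field_simp
  exact le_of_mul_le_mul_left (hrm ▸ hw) (rpow_pos_of_pos hr _)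

theorem odeDom_top : odeDom ⊤ = Ici 0 := by
  ext r
  simp [odeDom]

namespace IsSolOn

variable {m a : ℝ} {φ u : ℝ → ℝ}

theorem contDiffOn_Ici (hu : IsSolOn m φ a ⊤ u) : ContDiffOn ℝ 2 u (Ici 0) :=
  odeDom_top ▸ hu.1

theorem nonneg (hu : IsSolOn m φ a ⊤ u) {r : ℝ} (hr : 0 ≤ r) : 0 ≤ u r :=
  hu.2.1 r (odeDom_top ▸ hr)

theorem continuousOn_derivWithin (hu : IsSolOn m φ a ⊤ u) :
    ContinuousOn (derivWithin u (Ici 0)) (Ici 0) :=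
  hu.contDiffOn_Ici.continuousOn_derivWithin (uniqueDiffOn_Ici 0) one_le_two

theorem hasDerivAt (hu : IsSolOn m φ a ⊤ u) {r : ℝ} (hr : 0 < r) :
    HasDerivAt u (derivWithin u (Ici 0) r) r := by
  rw [derivWithin_of_mem_nhds (Ici_mem_nhds hr)]
  exact ((hu.contDiffOn_Ici.differentiableOn two_ne_zero).differentiableAt
    (Ici_mem_nhds hr)).hasDerivAt

theorem hasDerivAt_derivWithin (hu : IsSolOn m φ a ⊤ u) {r : ℝ} (hr : 0 < r) :
    HasDerivAt (derivWithin u (Ici 0))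
      (φ (u r) - (m - 1) / r * derivWithin u (Ici 0) r) r := by
  have hC1 : ContDiffOn ℝ 1 (deriv u) (Ioi 0) :=
    (hu.contDiffOn_Ici.mono Ioi_subset_Ici_self).deriv_of_isOpen isOpen_Ioi (by norm_num)
  have hu'' : deriv (deriv u) r = φ (u r) - (m - 1) / r * deriv u r :=
    eq_sub_of_add_eq (hu.2.2.2.2 r hr ENNReal.ofReal_lt_top)
  have h := ((hC1.differentiableOn one_ne_zero).differentiableAt (Ioi_mem_nhds hr)).hasDerivAt
  rw [hu'', ← derivWithin_of_mem_nhds (Ici_mem_nhds hr)] at h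
  exact h.congr_of_eventuallyEq <|
    (eventually_gt_nhds hr).mono fun x hx => derivWithin_of_mem_nhds (Ici_mem_nhds hx)

theorem radial_lower_bound (hu : IsSolOn m φ a ⊤ u) (hm : 1 < m) {c : ℝ}
    (hc : ∀ r, 0 < r → c ≤ φ (u r)) {r : ℝ} (hr : 0 < r) :
    c * r / m ≤ derivWithin u (Ici 0) r :=
  mul_div_le_of_radial hm hu.continuousOn_derivWithin hu.2.2.2.1
    (fun _ => hu.hasDerivAt_derivWithin) hc hr

theorem monotoneOn (hu : IsSolOn m φ a ⊤ u) (hm : 1 < m) (hφ : ∀ t, 0 ≤ t → 0 ≤ φ t) :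
    MonotoneOn u (Ici 0) := by
  have hderiv : ∀ x ∈ interior (Ici (0 : ℝ)), HasDerivAt u (derivWithin u (Ici 0) x) x := by
    rw [interior_Ici]
    exact fun x hx => hu.hasDerivAt hx
  refine monotoneOn_of_deriv_nonneg (convex_Ici 0) hu.contDiffOn_Ici.continuousOn
    (fun x hx => (hderiv x hx).differentiableAt.differentiableWithinAt) fun x hx => ?_
  rw [(hderiv x hx).deriv]
  rw [interior_Ici] at hx
  simpa using hu.radial_lower_bound hm (c := 0) (fun y hy => hφ _ (hu.nonneg hy.le)) hx

theorem add_mul_sq_le (hu : IsSolOn m φ a ⊤ u) (hm : 1 < m)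
    (hφ : ∀ t, 0 ≤ t → 0 ≤ φ t) (hφmono : MonotoneOn φ (Ici 0)) {r : ℝ} (hr : 0 ≤ r) :
    a + φ a / (2 * m) * r ^ 2 ≤ u r := by
  have hu₀ : u 0 = a := hu.2.2.1
  have hge : ∀ y, 0 ≤ y → a ≤ u y := fun y hy => hu₀ ▸ hu.monotoneOn hm hφ self_mem_Ici hy hy
  have ha : 0 ≤ a := hu₀ ▸ hu.nonneg le_rfl
  refine le_of_hasDerivAt_le_of_le_Ici (f := fun x => a + φ a / (2 * m) * x ^ 2)
    (f' := fun x => φ a * x / m) (by fun_prop) hu.contDiffOn_Ici.continuousOn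
    (fun x _ => ?_) (fun _ => hu.hasDerivAt) (by simp [hu₀])
    (fun x => hu.radial_lower_bound hm fun y hy => hφmono ha (ha.trans (hge y hy.le))
      (hge y hy.le)) hr
  refine ((hasDerivAt_pow 2 x).const_mul _).const_add a |>.congr_deriv ?_
  field_simp
  ring

end IsSolOn

theorem sol_quadratic_growth_general
    (m : ℝ) (hm : 2 < m)
    (φ : ℝ → ℝ)
    (hφmono : MonotoneOn φ (Set.Ici 0))
    (hφnonneg : ∀ t : ℝ, 0 ≤ t → 0 ≤ φ t)
    (a : ℝ)
    (u : ℝ → ℝ) (hu : IsSolOn m φ a ⊤ u) :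
    (∀ r : ℝ, 0 ≤ r → a + (φ a / (2 * m)) * r ^ 2 ≤ u r) ∧
      (0 < φ a → Tendsto u atTop atTop) := by
  have hm₁ : 1 < m := by linarith
  have hbound := fun r (hr : 0 ≤ r) => hu.add_mul_sq_le hm₁ hφnonneg hφmono hr
  refine ⟨hbound, fun hφa => ?_⟩
  have hquad : Tendsto (fun r : ℝ => a + φ a / (2 * m) * r ^ 2) atTop atTop :=
    tendsto_atTop_add_const_left _ _ <|
      (tendsto_pow_atTop two_ne_zero).const_mul_atTop (by positivity)
  exact tendsto_atTop_mono' atTop ((eventually_ge_atTop 0).mono hbound) hquad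

/-- a global solution with initial value a > 0 grows at least quadratically;
in particular it tends to ∞ when φ(a) > 0. -/
theorem sol_quadratic_growth
    (m : ℝ) (hm : 2 < m)
    (φ : ℝ → ℝ) (hφ0 : φ 0 = 0)
    (hφmono : MonotoneOn φ (Set.Ici 0))
    (hφnonneg : ∀ t : ℝ, 0 ≤ t → 0 ≤ φ t)
    (hφlip : ∀ x ∈ Set.Ici (0 : ℝ), ∃ K : NNReal, ∃ s ∈ nhdsWithin x (Set.Ici 0),
      LipschitzOnWith K φ s)
    (a : ℝ) (ha : 0 < a)
    (u : ℝ → ℝ) (hu : IsSolOn m φ a ⊤ u) :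
    (∀ r : ℝ, 0 ≤ r → a + (φ a / (2 * m)) * r ^ 2 ≤ u r) ∧
      (0 < φ a → Tendsto u atTop atTop) :=
  sol_quadratic_growth_general m hm φ hφmono hφnonneg a u hu
end
end

section
/- Let a ≥ 0 and let u be a solution with initial value a on [0,R). Then for every r ∈ (0,R), φ(u(r))/m ≤ u″(r) ≤ φ(u(r)). -/
open MeasureTheory Real Filter Set
open scoped ENNReal Topology

noncomputable section

/-!
Multiplying the equation by `r^(m-1)` puts it in divergence form `(r^(m-1) u')' = r^(m-1) φ(u)`.
Since `φ ∘ u ≥ 0` and the flux `r^(m-1) u'` vanishes at `0`, the flux is nonnegative, so `u' ≥ 0`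
and `u` is nondecreasing. Then `φ(u(s)) ≤ φ(u(r))` for `s ≤ r`, and integrating the divergence
form gives `r^(m-1) u'(r) ≤ r^m φ(u(r)) / m`. Feeding `0 ≤ u'(r) ≤ r φ(u(r)) / m` back into the
equation gives both bounds on `u''(r)`.
-/

theorem image_le_of_hasDerivAt_le {f g f' g' : ℝ → ℝ} {a b : ℝ} (hab : a ≤ b)
    (hf : ContinuousOn f (Icc a b)) (hg : ContinuousOn g (Icc a b))
    (hf' : ∀ x ∈ Ioo a b, HasDerivAt f (f' x) x) (hg' : ∀ x ∈ Ioo a b, HasDerivAt g (g' x) x)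
    (hfg' : ∀ x ∈ Ioo a b, f' x ≤ g' x) (ha : f a ≤ g a) : f b ≤ g b := by
  have hmono : MonotoneOn (g - f) (Icc a b) := by
    refine monotoneOn_of_hasDerivWithinAt_nonneg (f' := g' - f') (convex_Icc a b) (hg.sub hf) ?_ ?_
    · intro x hx
      rw [interior_Icc] at hx ⊢
      exact ((hg' x hx).sub (hf' x hx)).hasDerivWithinAt
    · intro x hx
      rw [interior_Icc] at hx
      exact sub_nonneg.mpr (hfg' x hx)
  have := hmono (left_mem_Icc.mpr hab) (right_mem_Icc.mpr hab) hab
  simp only [Pi.sub_apply] at this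
  linarith

theorem hasDerivAt_rpow_mul_deriv {v : ℝ → ℝ} {m s : ℝ} (hs : 0 < s)
    (hv : HasDerivAt (deriv v) (deriv (deriv v) s) s) :
    HasDerivAt (fun x => x ^ (m - 1) * deriv v x)
      (s ^ (m - 1) * (deriv (deriv v) s + (m - 1) / s * deriv v s)) s := by
  refine ((hasDerivAt_rpow_const (p := m - 1) (Or.inl hs.ne')).mul hv).congr_deriv ?_
  rw [sub_sub, one_add_one_eq_two, rpow_sub hs, rpow_sub hs, rpow_two, rpow_one]
  field_simp
  ring

lemma eventually_pos_and_ofReal_lt {R : ℝ≥0∞} {s : ℝ} (hs : 0 < s)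
    (hsR : ENNReal.ofReal s < R) : ∀ᶠ x in 𝓝 s, 0 < x ∧ ENNReal.ofReal x < R :=
  (eventually_gt_nhds hs).and (ENNReal.continuous_ofReal.continuousAt.eventually_lt_const hsR)

lemma odeDom_mem_nhds {R : ℝ≥0∞} {s : ℝ} (hs : 0 < s) (hsR : ENNReal.ofReal s < R) :
    odeDom R ∈ 𝓝 s :=
  (eventually_pos_and_ofReal_lt hs hsR).mono fun _ hx => ⟨hx.1.le, hx.2⟩

lemma Icc_subset_odeDom {R : ℝ≥0∞} {r : ℝ} (hrR : ENNReal.ofReal r < R) :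
    Icc 0 r ⊆ odeDom R :=
  fun _ hx => ⟨hx.1, (ENNReal.ofReal_le_ofReal hx.2).trans_lt hrR⟩

lemma uniqueDiffOn_odeDom (R : ℝ≥0∞) : UniqueDiffOn ℝ (odeDom R) := by
  rcases eq_or_ne R ⊤ with rfl | hR
  · have : odeDom ⊤ = Ici 0 := by ext x; simp [odeDom]
    exact this ▸ uniqueDiffOn_Ici 0
  · have : odeDom R = Ico 0 R.toReal := by
      ext x
      simp only [odeDom, mem_ofPred_eq, mem_Ico, and_congr_right_iff]
      exact fun hx => ENNReal.ofReal_lt_iff_lt_toReal hx hR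
    exact this ▸ uniqueDiffOn_Ico 0 _

namespace IsSolOn

variable {m : ℝ} {φ : ℝ → ℝ} {a : ℝ} {R : ℝ≥0∞} {u : ℝ → ℝ} {r : ℝ}

lemma differentiableAt (hu : IsSolOn m φ a R u) (hr : 0 < r) (hrR : ENNReal.ofReal r < R) :
    DifferentiableAt ℝ u r :=
  (hu.1.contDiffAt (odeDom_mem_nhds hr hrR)).differentiableAt (by norm_num)

lemma hasDerivAt_deriv (hu : IsSolOn m φ a R u) (hr : 0 < r) (hrR : ENNReal.ofReal r < R) :
    HasDerivAt (deriv u) (deriv (deriv u) r) r := by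
  have hC1 : ContDiffOn ℝ 1 (deriv u) (interior (odeDom R)) :=
    (hu.1.mono interior_subset).deriv_of_isOpen isOpen_interior (by norm_num)
  have hr' : interior (odeDom R) ∈ 𝓝 r :=
    isOpen_interior.mem_nhds (mem_interior_iff_mem_nhds.mpr (odeDom_mem_nhds hr hrR))
  exact ((hC1.contDiffAt hr').differentiableAt one_ne_zero).hasDerivAt

/-- The flux `s^(m-1) u'(s)`; the one-sided derivative keeps it continuous at `s = 0`. -/
def flux (m : ℝ) (R : ℝ≥0∞) (u : ℝ → ℝ) (s : ℝ) : ℝ :=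
  s ^ (m - 1) * derivWithin u (odeDom R) s

lemma flux_zero (hm : 1 < m) : flux m R u 0 = 0 := by
  simp [flux, zero_rpow (sub_ne_zero.mpr hm.ne')]

lemma flux_eq (hr : 0 < r) (hrR : ENNReal.ofReal r < R) :
    flux m R u r = r ^ (m - 1) * deriv u r := by
  rw [flux, derivWithin_of_mem_nhds (odeDom_mem_nhds hr hrR)]

lemma continuousOn_flux (hu : IsSolOn m φ a R u) (hm : 1 ≤ m) :
    ContinuousOn (flux m R u) (odeDom R) :=
  (continuous_rpow_const (sub_nonneg.mpr hm)).continuousOn.mul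
    (hu.1.continuousOn_derivWithin (uniqueDiffOn_odeDom R) (by norm_num))

lemma hasDerivAt_flux (hu : IsSolOn m φ a R u) (hr : 0 < r) (hrR : ENNReal.ofReal r < R) :
    HasDerivAt (flux m R u) (r ^ (m - 1) * φ (u r)) r := by
  have hflux : (fun x => x ^ (m - 1) * deriv u x) =ᶠ[𝓝 r] flux m R u :=
    (eventually_pos_and_ofReal_lt hr hrR).mono fun x hx => (flux_eq hx.1 hx.2).symm
  have := hasDerivAt_rpow_mul_deriv (m := m) hr (hu.hasDerivAt_deriv hr hrR)
  rw [hu.2.2.2.2 r hr hrR] at this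
  exact this.congr_of_eventuallyEq hflux.symm

lemma deriv_nonneg (hu : IsSolOn m φ a R u) (hm : 1 < m) (hφ : ∀ t, 0 ≤ t → 0 ≤ φ t)
    (hr : 0 < r) (hrR : ENNReal.ofReal r < R) : 0 ≤ deriv u r := by
  have hsub := Icc_subset_odeDom hrR
  have hflux : 0 ≤ flux m R u r := by
    refine image_le_of_hasDerivAt_le (f' := 0) hr.le continuousOn_const
      ((hu.continuousOn_flux hm.le).mono hsub) (fun x _ => hasDerivAt_const x 0)
      (fun x hx => hu.hasDerivAt_flux hx.1 (hsub (Ioo_subset_Icc_self hx)).2)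
      (fun x hx => ?_) (flux_zero hm).ge
    exact mul_nonneg (rpow_nonneg hx.1.le _) (hφ _ (hu.2.1 x (hsub (Ioo_subset_Icc_self hx))))
  rw [flux_eq hr hrR] at hflux
  exact nonneg_of_mul_nonneg_right hflux (rpow_pos_of_pos hr _)

lemma monotoneOn_Icc (hu : IsSolOn m φ a R u) (hm : 1 < m) (hφ : ∀ t, 0 ≤ t → 0 ≤ φ t)
    (hrR : ENNReal.ofReal r < R) : MonotoneOn u (Icc 0 r) := by
  have hmem : ∀ x ∈ interior (Icc 0 r), 0 < x ∧ ENNReal.ofReal x < R := fun x hx => by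
    rw [interior_Icc] at hx
    exact ⟨hx.1, (Icc_subset_odeDom hrR (Ioo_subset_Icc_self hx)).2⟩
  refine monotoneOn_of_hasDerivWithinAt_nonneg (f' := deriv u) (convex_Icc 0 r)
    (hu.1.continuousOn.mono (Icc_subset_odeDom hrR)) (fun x hx => ?_) (fun x hx => ?_)
  · exact (hu.differentiableAt (hmem x hx).1 (hmem x hx).2).hasDerivAt.hasDerivWithinAt
  · exact hu.deriv_nonneg hm hφ (hmem x hx).1 (hmem x hx).2

lemma deriv_le (hu : IsSolOn m φ a R u) (hm : 1 < m) (hφ : ∀ t, 0 ≤ t → 0 ≤ φ t)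
    (hφmono : MonotoneOn φ (Ici 0)) (hr : 0 < r) (hrR : ENNReal.ofReal r < R) :
    deriv u r ≤ r * φ (u r) / m := by
  have hsub := Icc_subset_odeDom hrR
  have hm0 : 0 < m := by linarith
  -- `s^m φ(u r) / m` is the flux of the solution with the constant source `φ(u r)`
  have hflux : flux m R u r ≤ r ^ m * (φ (u r) / m) := by
    refine image_le_of_hasDerivAt_le hr.le ((hu.continuousOn_flux hm.le).mono hsub)
      ((continuous_rpow_const hm0.le).continuousOn.mul continuousOn_const)
      (fun x hx => hu.hasDerivAt_flux hx.1 (hsub (Ioo_subset_Icc_self hx)).2)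
      (fun x hx => (hasDerivAt_rpow_const (Or.inl hx.1.ne')).mul_const _) (fun x hx => ?_)
      (by simp [flux_zero hm, zero_rpow hm0.ne'])
    have hux : φ (u x) ≤ φ (u r) :=
      hφmono (hu.2.1 x (hsub (Ioo_subset_Icc_self hx))) (hu.2.1 r (hsub ⟨hr.le, le_rfl⟩))
        (hu.monotoneOn_Icc hm hφ hrR (Ioo_subset_Icc_self hx) ⟨hr.le, le_rfl⟩ hx.2.le)
    calc x ^ (m - 1) * φ (u x) ≤ x ^ (m - 1) * φ (u r) :=
          mul_le_mul_of_nonneg_left hux (rpow_nonneg hx.1.le _)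
      _ = m * x ^ (m - 1) * (φ (u r) / m) := by field_simp
  have hpow : r ^ m = r ^ (m - 1) * r := by rw [← rpow_add_one hr.ne']; norm_num
  rw [flux_eq hr hrR, hpow] at hflux
  exact le_of_mul_le_mul_left (hflux.trans_eq (by ring)) (rpow_pos_of_pos hr _)

end IsSolOn

theorem sol_second_deriv_bounds_general
    (m : ℝ) (hm : 2 < m)
    (φ : ℝ → ℝ)
    (hφmono : MonotoneOn φ (Set.Ici 0))
    (hφnonneg : ∀ t : ℝ, 0 ≤ t → 0 ≤ φ t)
    (a : ℝ) (R : ℝ≥0∞)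
    (u : ℝ → ℝ) (hu : IsSolOn m φ a R u) :
    ∀ r : ℝ, 0 < r → ENNReal.ofReal r < R →
      φ (u r) / m ≤ deriv (deriv u) r ∧ deriv (deriv u) r ≤ φ (u r) := by
  intro r hr hrR
  have hm1 : 1 < m := by linarith
  have hode : deriv (deriv u) r = φ (u r) - (m - 1) / r * deriv u r := by
    linarith [hu.2.2.2.2 r hr hrR]
  have hcoef : 0 ≤ (m - 1) / r := div_nonneg (by linarith) hr.le
  have hdrag_le : (m - 1) / r * deriv u r ≤ φ (u r) - φ (u r) / m :=
    calc (m - 1) / r * deriv u r ≤ (m - 1) / r * (r * φ (u r) / m) :=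
          mul_le_mul_of_nonneg_left (hu.deriv_le hm1 hφnonneg hφmono hr hrR) hcoef
      _ = φ (u r) - φ (u r) / m := by field_simp
  have hdrag_nonneg : 0 ≤ (m - 1) / r * deriv u r :=
    mul_nonneg hcoef (hu.deriv_nonneg hm1 hφnonneg hr hrR)
  constructor <;> linarith

/-- two-sided bound on the second derivative of a solution. -/
theorem sol_second_deriv_bounds
    (m : ℝ) (hm : 2 < m)
    (φ : ℝ → ℝ) (hφ0 : φ 0 = 0)
    (hφmono : MonotoneOn φ (Set.Ici 0))
    (hφnonneg : ∀ t : ℝ, 0 ≤ t → 0 ≤ φ t)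
    (hφlip : ∀ x ∈ Set.Ici (0 : ℝ), ∃ K : NNReal, ∃ s ∈ nhdsWithin x (Set.Ici 0),
      LipschitzOnWith K φ s)
    (a : ℝ) (ha : 0 ≤ a) (R : ℝ≥0∞) (hR : 0 < R)
    (u : ℝ → ℝ) (hu : IsSolOn m φ a R u) :
    ∀ r : ℝ, 0 < r → ENNReal.ofReal r < R →
      φ (u r) / m ≤ deriv (deriv u) r ∧ deriv (deriv u) r ≤ φ (u r) :=
  sol_second_deriv_bounds_general m hm φ hφmono hφnonneg a R u hu
end
end

section
/- One has lim_{ρ→0⁺} R_ρ = ∞; that is, for every M > 0 there exists δ > 0 such that R_ρ > M for every ρ ∈ (0,δ). -/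
open MeasureTheory Real Filter Set
open scoped ENNReal Topology

noncomputable section

/-- The maximal existence radius `R_a`: the supremum of all `R ∈ (0, ∞]` such that a solution
with initial value `a` exists on `[0, R)`. -/
def maxRadius (m : ℝ) (φ : ℝ → ℝ) (a : ℝ) : ℝ≥0∞ :=
  sSup {R : ℝ≥0∞ | 0 < R ∧ ∃ u : ℝ → ℝ, IsSolOn m φ a R u}


/-! Writing the equation as `(r^(m-1) u')' = r^(m-1) φ(u)` and integrating twice turns the
initial value problem into the fixed-point equation `u = ρ + R[φ ∘ u]`, with
`R ψ (r) = ∫₀ʳ s^(1-m) ∫₀ˢ t^(m-1) ψ(t) dt ds`. The inner average `s^(-m) ∫₀ˢ t^(m-1) ψ` is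
at most `sup ψ / m`. Near `0` the nonlinearity satisfies `0 ≤ φ(x) ≤ K x`, so the functions with
`0 ≤ u(r) ≤ ρ exp(K r² / (2m))` on `[0, L]` form a closed invariant set, which stays inside the
Lipschitz region `[0, ε]` of `φ` once `ρ exp(K L² / (2m)) ≤ ε`. There the `n`-th iterate of the
map is `(K L² / (2m))ⁿ / n!`-Lipschitz, so it has a fixed point: a solution on `[0, L)` for every
sufficiently small `ρ`. -/

open intervalIntegral
open scoped NNReal

theorem hasDerivAt_id_mul_of_continuousAt {g : ℝ → ℝ} (hg : ContinuousAt g 0) :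
    HasDerivAt (fun x => x * g x) (g 0) 0 := by
  rw [hasDerivAt_iff_tendsto_slope]
  refine (hg.tendsto.mono_left nhdsWithin_le_nhds).congr' ?_
  filter_upwards [self_mem_nhdsWithin] with x (hx : x ≠ 0)
  simp [slope_def_field, hx]

theorem contDiffOn_two_of_hasDerivWithinAt {f f' f'' : ℝ → ℝ} {s : Set ℝ}
    (hs : UniqueDiffOn ℝ s) (hf : ∀ x ∈ s, HasDerivWithinAt f (f' x) s x)
    (hf' : ∀ x ∈ s, HasDerivWithinAt f' (f'' x) s x) (hf'' : ContinuousOn f'' s) :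
    ContDiffOn ℝ 2 f s := by
  have h1 : ContDiffOn ℝ 1 f' s :=
    (contDiffOn_one_iff_derivWithin hs).2 ⟨fun x hx => (hf' x hx).differentiableWithinAt,
      hf''.congr fun x hx => (hf' x hx).derivWithin (hs x hx)⟩
  exact (contDiffOn_succ_iff_derivWithin hs (n := 1)).2
    ⟨fun x hx => (hf x hx).differentiableWithinAt, by simp,
      h1.congr fun x hx => (hf x hx).derivWithin (hs x hx)⟩

theorem ContinuousMap.isClosed_setOf_forall_mem {X Y : Type*} [TopologicalSpace X]
    [TopologicalSpace Y] {s : X → Set Y} (hs : ∀ x, IsClosed (s x)) :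
    IsClosed {f : C(X, Y) | ∀ x, f x ∈ s x} := by
  simp only [ofPred_forall]
  exact isClosed_iInter fun x => (hs x).preimage (continuous_eval_const x)

theorem exists_isFixedPt_of_dist_iterate_le {X : Type*} [MetricSpace X] [CompleteSpace X]
    [Nonempty X] {T : X → X} {c : ℝ}
    (h : ∀ (n : ℕ) (x y : X), dist (T^[n] x) (T^[n] y) ≤ c ^ n / n.factorial * dist x y) :
    ∃ x, Function.IsFixedPt T x := by
  obtain ⟨n, hn⟩ :=
    ((FloorSemiring.tendsto_pow_div_factorial_atTop c).eventually (gt_mem_nhds one_pos)).exists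
  have hT : ContractingWith (c ^ n / n.factorial).toNNReal T^[n] :=
    ⟨Real.toNNReal_lt_one.2 hn, LipschitzWith.of_dist_le_mul fun x y =>
      (h n x y).trans (mul_le_mul_of_nonneg_right (Real.le_coe_toNNReal _) dist_nonneg)⟩
  exact ⟨_, hT.isFixedPt_fixedPoint_iterate⟩

theorem dist_iterate_le_of_abs_sub_le {L b : ℝ} (hb : 0 ≤ b) {S : Set C(Icc (0 : ℝ) L, ℝ)}
    {T : S → S}
    (hT : ∀ (f h : S) (n : ℕ) (D : ℝ), 0 ≤ D →
      (∀ x : Icc (0 : ℝ) L, |f.1 x - h.1 x| ≤ D * (x : ℝ) ^ (2 * n)) →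
      ∀ x : Icc (0 : ℝ) L, |(T f).1 x - (T h).1 x| ≤ b * D * (x : ℝ) ^ (2 * (n + 1)) / (n + 1))
    (n : ℕ) (f h : S) : dist (T^[n] f) (T^[n] h) ≤ (b * L ^ 2) ^ n / n.factorial * dist f h := by
  have key : ∀ (n : ℕ) (x : Icc (0 : ℝ) L),
      |(T^[n] f).1 x - (T^[n] h).1 x| ≤ b ^ n * dist f h / n.factorial * (x : ℝ) ^ (2 * n) := by
    intro n
    induction n with
    | zero =>
      intro x
      simpa [← Real.dist_eq, Subtype.dist_eq] using
        ContinuousMap.dist_apply_le_dist (f := f.1) (g := h.1) x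
    | succ n ih =>
      intro x
      simp only [Function.iterate_succ_apply']
      refine (hT _ _ n _ (by positivity) ih x).trans (le_of_eq ?_)
      rw [Nat.factorial_succ]
      push_cast
      field_simp
      ring
  rw [Subtype.dist_eq]
  refine (ContinuousMap.dist_le (by positivity)).2 fun x => ?_
  rw [Real.dist_eq]
  calc _ ≤ b ^ n * dist f h / n.factorial * (x : ℝ) ^ (2 * n) := key n x
    _ ≤ b ^ n * dist f h / n.factorial * L ^ (2 * n) := by
      gcongr
      exacts [x.2.1, x.2.2]
    _ = (b * L ^ 2) ^ n / n.factorial * dist f h := by ring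

section Radial

variable {m : ℝ} {ψ : ℝ → ℝ}

-- The substitution `t = τ s` in `s ^ (-m) * ∫ t in 0..s, t ^ (m - 1) * ψ t`, which makes
-- continuity at `s = 0` evident.
def radialMean (m : ℝ) (ψ : ℝ → ℝ) (s : ℝ) : ℝ := ∫ τ in (0 : ℝ)..1, τ ^ (m - 1) * ψ (τ * s)

def radialPrimitive (m : ℝ) (ψ : ℝ → ℝ) (r : ℝ) : ℝ := ∫ s in (0 : ℝ)..r, s * radialMean m ψ s

theorem rpow_one_sub_mul_rpow_sub_one {s : ℝ} (hs : 0 < s) : s ^ (1 - m) * s ^ (m - 1) = 1 := by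
  rw [← Real.rpow_add hs]
  simp

theorem continuous_radialMean (hm : 1 ≤ m) (hψ : Continuous ψ) : Continuous (radialMean m ψ) := by
  have hpow := Real.continuous_rpow_const (q := m - 1) (by linarith)
  exact continuous_parametric_intervalIntegral_of_continuous' (by fun_prop) 0 1

theorem radialMean_zero (hm : 0 < m) : radialMean m ψ 0 = ψ 0 / m := by
  simp [radialMean, intervalIntegral.integral_mul_const,
    integral_rpow (Or.inl (by linarith : -1 < m - 1)), Real.zero_rpow hm.ne']
  field_simp

theorem mul_radialMean_eq {s : ℝ} (hs : 0 < s) :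
    s * radialMean m ψ s = s ^ (1 - m) * ∫ t in (0 : ℝ)..s, t ^ (m - 1) * ψ t := by
  have hpow : ∀ τ ∈ uIcc (0 : ℝ) 1,
      τ ^ (m - 1) * ψ (τ * s) = s ^ (1 - m) * ((τ * s) ^ (m - 1) * ψ (τ * s)) := by
    intro τ hτ
    rw [uIcc_of_le zero_le_one] at hτ
    rw [Real.mul_rpow hτ.1 hs.le]
    linear_combination (-(τ ^ (m - 1) * ψ (τ * s))) * rpow_one_sub_mul_rpow_sub_one (m := m) hs
  rw [radialMean, integral_congr hpow, intervalIntegral.integral_const_mul,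
    integral_comp_mul_right (fun t => t ^ (m - 1) * ψ t) hs.ne', zero_mul, one_mul, smul_eq_mul]
  field_simp

theorem hasDerivAt_mul_radialMean (hm : 1 ≤ m) (hψ : Continuous ψ) {s : ℝ} (hs : 0 ≤ s) :
    HasDerivAt (fun x => x * radialMean m ψ x) (ψ s - (m - 1) * radialMean m ψ s) s := by
  rcases hs.eq_or_lt with rfl | hs
  · convert hasDerivAt_id_mul_of_continuousAt (continuous_radialMean hm hψ).continuousAt using 1
    rw [radialMean_zero (by linarith)]
    field_simp
    ring
  have hB : HasDerivAt (fun x => ∫ t in (0 : ℝ)..x, t ^ (m - 1) * ψ t) (s ^ (m - 1) * ψ s) s :=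
    ((Real.continuous_rpow_const (by linarith)).mul hψ).integral_hasStrictDerivAt 0 s |>.hasDerivAt
  have hpow : HasDerivAt (fun x : ℝ => x ^ (1 - m)) ((1 - m) * s ^ (1 - m - 1)) s :=
    Real.hasDerivAt_rpow_const (Or.inl hs.ne')
  refine ((hpow.mul hB).congr_of_eventuallyEq ?_).congr_deriv ?_
  · filter_upwards [Ioi_mem_nhds hs] with x hx
    exact mul_radialMean_eq hx
  calc (1 - m) * s ^ (1 - m - 1) * (∫ t in (0 : ℝ)..s, t ^ (m - 1) * ψ t)
        + s ^ (1 - m) * (s ^ (m - 1) * ψ s)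
      = (1 - m) * (s ^ (1 - m) * ∫ t in (0 : ℝ)..s, t ^ (m - 1) * ψ t) / s
        + s ^ (1 - m) * s ^ (m - 1) * ψ s := by rw [Real.rpow_sub_one hs.ne']; ring
    _ = (1 - m) * (s * radialMean m ψ s) / s + ψ s := by
        rw [mul_radialMean_eq hs, rpow_one_sub_mul_rpow_sub_one hs, one_mul]
    _ = ψ s - (m - 1) * radialMean m ψ s := by field_simp; ring

theorem hasDerivAt_radialPrimitive (hm : 1 ≤ m) (hψ : Continuous ψ) (r : ℝ) :
    HasDerivAt (radialPrimitive m ψ) (r * radialMean m ψ r) r :=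
  ((continuous_id.mul (continuous_radialMean hm hψ)).integral_hasStrictDerivAt 0 r).hasDerivAt

theorem contDiffOn_radialPrimitive (hm : 1 ≤ m) (hψ : Continuous ψ) :
    ContDiffOn ℝ 2 (radialPrimitive m ψ) (Ici 0) :=
  contDiffOn_two_of_hasDerivWithinAt (uniqueDiffOn_Ici 0)
    (fun r _ => (hasDerivAt_radialPrimitive hm hψ r).hasDerivWithinAt)
    (fun _ hs => (hasDerivAt_mul_radialMean hm hψ hs).hasDerivWithinAt)
    (hψ.sub (continuous_const.mul (continuous_radialMean hm hψ))).continuousOn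

theorem deriv_deriv_add_mul_deriv_eq_of_eventuallyEq (hm : 1 ≤ m) (hψ : Continuous ψ)
    {u : ℝ → ℝ} {a r : ℝ} (hr : 0 < r) (hu : u =ᶠ[𝓝 r] fun x => a + radialPrimitive m ψ x) :
    deriv (deriv u) r + ((m - 1) / r) * deriv u r = ψ r := by
  have hu' : deriv u =ᶠ[𝓝 r] fun x => x * radialMean m ψ x :=
    hu.deriv.trans (Eventually.of_forall fun x =>
      ((hasDerivAt_radialPrimitive hm hψ x).const_add a).deriv)
  rw [hu'.deriv_eq, hu'.eq_of_nhds, (hasDerivAt_mul_radialMean hm hψ hr.le).deriv]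
  field_simp
  ring

theorem radialPrimitive_nonneg {r : ℝ} (hr : 0 ≤ r) (hψ : ∀ t ∈ Icc 0 r, 0 ≤ ψ t) :
    0 ≤ radialPrimitive m ψ r := by
  refine integral_nonneg hr fun s hs => mul_nonneg hs.1 (integral_nonneg zero_le_one fun τ hτ =>
    mul_nonneg (Real.rpow_nonneg hτ.1 _) (hψ _ ⟨mul_nonneg hτ.1 hs.1, ?_⟩))
  exact (mul_le_of_le_one_left hs.1 hτ.2).trans hs.2

theorem abs_radialMean_le (hm : 1 ≤ m) (hψ : Continuous ψ) {χ : ℝ → ℝ} {r s : ℝ}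
    (hχ : MonotoneOn χ (Icc 0 r)) (hψχ : ∀ t ∈ Icc 0 r, |ψ t| ≤ χ t) (hs : s ∈ Icc 0 r) :
    |radialMean m ψ s| ≤ χ s / m := by
  have hpow := Real.continuous_rpow_const (q := m - 1) (by linarith)
  calc |radialMean m ψ s| ≤ ∫ τ in (0 : ℝ)..1, |τ ^ (m - 1) * ψ (τ * s)| :=
        abs_integral_le_integral_abs zero_le_one
    _ ≤ ∫ τ in (0 : ℝ)..1, τ ^ (m - 1) * χ s := by
        refine integral_mono_on zero_le_one (by apply Continuous.intervalIntegrable; fun_prop)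
          (by apply Continuous.intervalIntegrable; fun_prop) fun τ hτ => ?_
        have hτs : τ * s ∈ Icc 0 r :=
          ⟨mul_nonneg hτ.1 hs.1, (mul_le_of_le_one_left hs.1 hτ.2).trans hs.2⟩
        rw [abs_mul, abs_of_nonneg (Real.rpow_nonneg hτ.1 _)]
        exact mul_le_mul_of_nonneg_left ((hψχ _ hτs).trans
          (hχ hτs hs (mul_le_of_le_one_left hs.1 hτ.2))) (Real.rpow_nonneg hτ.1 _)
    _ = χ s / m := by
        rw [intervalIntegral.integral_mul_const,
          integral_rpow (Or.inl (by linarith : -1 < m - 1)), Real.zero_rpow (by linarith)]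
        simp only [sub_add_cancel, Real.one_rpow, sub_zero]
        ring

theorem abs_radialPrimitive_le (hm : 1 ≤ m) (hψ : Continuous ψ) {χ : ℝ → ℝ} {r : ℝ}
    (hr : 0 ≤ r) (hχc : Continuous χ) (hχ : MonotoneOn χ (Icc 0 r))
    (hψχ : ∀ t ∈ Icc 0 r, |ψ t| ≤ χ t) :
    |radialPrimitive m ψ r| ≤ ∫ s in (0 : ℝ)..r, s * χ s / m := by
  have hJ := continuous_radialMean hm hψ
  refine (abs_integral_le_integral_abs hr).trans (integral_mono_on hr
    (by apply Continuous.intervalIntegrable; fun_prop)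
    (by apply Continuous.intervalIntegrable; fun_prop) fun s hs => ?_)
  rw [abs_mul, abs_of_nonneg hs.1, mul_div_assoc]
  exact mul_le_mul_of_nonneg_left (abs_radialMean_le hm hψ hχ hψχ hs) hs.1

theorem radialMean_sub (hm : 1 ≤ m) {ψ₁ ψ₂ : ℝ → ℝ} (h₁ : Continuous ψ₁) (h₂ : Continuous ψ₂)
    (s : ℝ) : radialMean m (ψ₁ - ψ₂) s = radialMean m ψ₁ s - radialMean m ψ₂ s := by
  have hpow := Real.continuous_rpow_const (q := m - 1) (by linarith)
  simp only [radialMean, Pi.sub_apply, mul_sub]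
  exact integral_sub (by apply Continuous.intervalIntegrable; fun_prop)
    (by apply Continuous.intervalIntegrable; fun_prop)

theorem radialPrimitive_sub (hm : 1 ≤ m) {ψ₁ ψ₂ : ℝ → ℝ} (h₁ : Continuous ψ₁)
    (h₂ : Continuous ψ₂) (r : ℝ) :
    radialPrimitive m (ψ₁ - ψ₂) r = radialPrimitive m ψ₁ r - radialPrimitive m ψ₂ r := by
  have hJ₁ := continuous_radialMean hm h₁
  have hJ₂ := continuous_radialMean hm h₂
  simp only [radialPrimitive, radialMean_sub hm h₁ h₂, mul_sub]
  exact integral_sub (by apply Continuous.intervalIntegrable; fun_prop)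
    (by apply Continuous.intervalIntegrable; fun_prop)

theorem radialPrimitive_le_exp (hm : 1 ≤ m) (hψ : Continuous ψ) {K ρ r : ℝ} (hK : 0 ≤ K)
    (hρ : 0 ≤ ρ) (hr : 0 ≤ r) (hψK : ∀ t ∈ Icc 0 r, |ψ t| ≤ K * (ρ * exp (K / m * t ^ 2 / 2))) :
    radialPrimitive m ψ r ≤ ρ * exp (K / m * r ^ 2 / 2) - ρ := by
  have hmono : MonotoneOn (fun t : ℝ => K * (ρ * exp (K / m * t ^ 2 / 2))) (Icc 0 r) := by
    intro x hx y hy hxy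
    have : x ^ 2 ≤ y ^ 2 := pow_le_pow_left₀ hx.1 hxy 2
    have : 0 ≤ K / m := div_nonneg hK (by linarith)
    dsimp only
    gcongr
  have hderiv : ∀ s ∈ uIcc 0 r, HasDerivAt (fun t => ρ * exp (K / m * t ^ 2 / 2))
      (s * (K * (ρ * exp (K / m * s ^ 2 / 2))) / m) s := by
    intro s _
    refine ((((hasDerivAt_pow 2 s).const_mul (K / m)).div_const 2).exp.const_mul ρ).congr_deriv ?_
    norm_num
    ring
  calc radialPrimitive m ψ r ≤ |radialPrimitive m ψ r| := le_abs_self _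
    _ ≤ ∫ s in (0 : ℝ)..r, s * (K * (ρ * exp (K / m * s ^ 2 / 2))) / m :=
        abs_radialPrimitive_le hm hψ hr (by fun_prop) hmono hψK
    _ = ρ * exp (K / m * r ^ 2 / 2) - ρ := by
        rw [integral_eq_sub_of_hasDerivAt hderiv
          (by apply Continuous.intervalIntegrable; fun_prop)]
        simp

theorem abs_radialPrimitive_sub_le (hm : 1 ≤ m) {ψ₁ ψ₂ : ℝ → ℝ} (h₁ : Continuous ψ₁)
    (h₂ : Continuous ψ₂) {C r : ℝ} (hC : 0 ≤ C) (hr : 0 ≤ r) (n : ℕ)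
    (h : ∀ t ∈ Icc 0 r, |ψ₁ t - ψ₂ t| ≤ C * t ^ (2 * n)) :
    |radialPrimitive m ψ₁ r - radialPrimitive m ψ₂ r| ≤
      C / (2 * m) * r ^ (2 * (n + 1)) / (n + 1) := by
  have hmono : MonotoneOn (fun t : ℝ => C * t ^ (2 * n)) (Icc 0 r) := fun x hx y _ hxy => by
    dsimp only
    gcongr
    exact hx.1
  rw [← radialPrimitive_sub hm h₁ h₂]
  refine (abs_radialPrimitive_le hm (h₁.sub h₂) hr (by fun_prop) hmono h).trans (le_of_eq ?_)
  have hpow : ∀ s ∈ uIcc (0 : ℝ) r, s * (C * s ^ (2 * n)) / m = C / m * s ^ (2 * n + 1) :=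
    fun s _ => by ring
  rw [integral_congr hpow, intervalIntegral.integral_const_mul, integral_pow]
  have : (m : ℝ) ≠ 0 := by linarith
  push_cast
  field_simp
  ring

theorem abs_radialPrimitive_comp_sub_le (hm : 1 ≤ m) {φ u v : ℝ → ℝ} {K : ℝ≥0}
    {s : Set ℝ} (hlip : LipschitzOnWith K φ s) (hu : ∀ t, u t ∈ s) (hv : ∀ t, v t ∈ s)
    (hψu : Continuous (φ ∘ u)) (hψv : Continuous (φ ∘ v)) {D r : ℝ} (hD : 0 ≤ D) (hr : 0 ≤ r)
    (n : ℕ) (huv : ∀ t ∈ Icc 0 r, |u t - v t| ≤ D * t ^ (2 * n)) :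
    |radialPrimitive m (φ ∘ u) r - radialPrimitive m (φ ∘ v) r| ≤
      K / (2 * m) * D * r ^ (2 * (n + 1)) / (n + 1) := by
  have := abs_radialPrimitive_sub_le hm hψu hψv (mul_nonneg K.coe_nonneg hD) hr n fun t ht => calc
    |φ (u t) - φ (v t)| ≤ K * |u t - v t| := by
        simpa [Real.dist_eq] using hlip.dist_le_mul _ (hu t) _ (hv t)
    _ ≤ K * (D * t ^ (2 * n)) := mul_le_mul_of_nonneg_left (huv t ht) K.coe_nonneg
    _ = K * D * t ^ (2 * n) := by ring
  convert this using 2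
  ring

theorem add_radialPrimitive_mem_Icc (hm : 1 ≤ m) {φ u : ℝ → ℝ} {K : ℝ≥0} {ε ρ r : ℝ}
    (hφ0 : φ 0 = 0) (hφnonneg : ∀ t ∈ Icc 0 ε, 0 ≤ φ t) (hlip : LipschitzOnWith K φ (Icc 0 ε))
    (hρ : 0 ≤ ρ) (hr : 0 ≤ r) (hψ : Continuous (φ ∘ u)) (hu : ∀ t, u t ∈ Icc 0 ε)
    (hug : ∀ t ∈ Icc 0 r, u t ≤ ρ * exp (K / m * t ^ 2 / 2)) :
    ρ + radialPrimitive m (φ ∘ u) r ∈ Icc 0 (ρ * exp (K / m * r ^ 2 / 2)) := by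
  have hφK : ∀ t ∈ Icc 0 ε, |φ t| ≤ K * t := fun t ht => by
    simpa [hφ0, Real.dist_eq, abs_of_nonneg ht.1] using
      hlip.dist_le_mul t ht 0 ⟨le_rfl, ht.1.trans ht.2⟩
  refine ⟨add_nonneg hρ (radialPrimitive_nonneg hr fun t _ => hφnonneg _ (hu t)),
    le_sub_iff_add_le'.1 (radialPrimitive_le_exp hm hψ K.coe_nonneg hρ hr fun t ht => ?_)⟩
  exact (hφK _ (hu t)).trans (mul_le_mul_of_nonneg_left (hug t ht) K.coe_nonneg)

theorem exists_eqOn_add_radialPrimitive (hm : 1 ≤ m) {φ : ℝ → ℝ} {K : ℝ≥0} {ε L ρ : ℝ}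
    (hφ0 : φ 0 = 0) (hφnonneg : ∀ t ∈ Icc 0 ε, 0 ≤ φ t) (hlip : LipschitzOnWith K φ (Icc 0 ε))
    (hL : 0 ≤ L) (hρ : 0 ≤ ρ) (hρε : ρ * exp (K / m * L ^ 2 / 2) ≤ ε) :
    ∃ u : ℝ → ℝ, Continuous (φ ∘ u) ∧ (∀ r, 0 ≤ u r) ∧
      EqOn u (fun r => ρ + radialPrimitive m (φ ∘ u) r) (Icc 0 L) := by
  -- the Gronwall envelope: `g r = ρ + ∫₀ʳ s K g(s) / m ds`
  let g (r : ℝ) : ℝ := ρ * exp (K / m * r ^ 2 / 2)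
  let S : Set C(Icc (0 : ℝ) L, ℝ) := {f | ∀ x : Icc (0 : ℝ) L, f x ∈ Icc 0 (g x)}
  have : CompleteSpace S :=
    (ContinuousMap.isClosed_setOf_forall_mem fun _ => isClosed_Icc).completeSpace_coe
  have : Nonempty S := ⟨⟨ContinuousMap.const _ ρ,
    fun _ => ⟨hρ, le_mul_of_one_le_right hρ (one_le_exp (by positivity))⟩⟩⟩
  let ext (f : S) : ℝ → ℝ := IccExtend hL f.1
  have hext_eq (f : S) {t : ℝ} (ht : t ∈ Icc 0 L) : ext f t = f.1 ⟨t, ht⟩ := IccExtend_of_mem _ _ ht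
  have hext (f : S) (t : ℝ) : ext f t ∈ Icc 0 ε := by
    obtain ⟨x, hx⟩ : ∃ x : Icc (0 : ℝ) L, ext f t = f.1 x := ⟨_, rfl⟩
    refine hx ▸ ⟨(f.2 x).1, (f.2 x).2.trans ((mul_le_mul_of_nonneg_left ?_ hρ).trans hρε)⟩
    exact exp_le_exp.2 (by gcongr; exacts [x.2.1, x.2.2])
  have hψ (f : S) : Continuous (φ ∘ ext f) :=
    hlip.continuousOn.comp_continuous f.1.continuous.Icc_extend' (hext f)
  have hR (f : S) : Continuous (radialPrimitive m (φ ∘ ext f)) :=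
    continuous_iff_continuousAt.2 fun r => (hasDerivAt_radialPrimitive hm (hψ f) r).continuousAt
  let T (f : S) : S :=
    ⟨⟨fun x => ρ + radialPrimitive m (φ ∘ ext f) x, by fun_prop⟩, fun x =>
      add_radialPrimitive_mem_Icc hm hφ0 hφnonneg hlip hρ x.2.1 (hψ f) (hext f) fun t ht => by
        rw [hext_eq f ⟨ht.1, ht.2.trans x.2.2⟩]
        exact (f.2 _).2⟩
  have hT (f h : S) (n : ℕ) (D : ℝ) (hD : 0 ≤ D)
      (hfh : ∀ x : Icc (0 : ℝ) L, |f.1 x - h.1 x| ≤ D * (x : ℝ) ^ (2 * n)) (x : Icc (0 : ℝ) L) :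
      |(T f).1 x - (T h).1 x| ≤ K / (2 * m) * D * (x : ℝ) ^ (2 * (n + 1)) / (n + 1) := by
    have := abs_radialPrimitive_comp_sub_le hm hlip (hext f) (hext h) (hψ f) (hψ h) hD x.2.1 n
      fun t ht => by
        have htL : t ∈ Icc 0 L := ⟨ht.1, ht.2.trans x.2.2⟩
        simpa only [hext_eq _ htL] using hfh ⟨t, htL⟩
    simpa [T] using this
  obtain ⟨F, hF⟩ := exists_isFixedPt_of_dist_iterate_le
    (dist_iterate_le_of_abs_sub_le (by positivity) hT)
  refine ⟨ext F, hψ F, fun r => (hext F r).1, fun r hr => ?_⟩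
  exact (hext_eq F hr).trans (congrArg (fun f : S => f.1 ⟨r, hr⟩) hF).symm

theorem isSolOn_of_eqOn_add_radialPrimitive (hm : 1 ≤ m) {φ u : ℝ → ℝ} {a : ℝ} {R : ℝ≥0∞}
    (hR : 0 < R) (hψ : Continuous (φ ∘ u)) (hu0 : ∀ r ∈ odeDom R, 0 ≤ u r)
    (hu : EqOn u (fun r => a + radialPrimitive m (φ ∘ u) r) (odeDom R)) : IsSolOn m φ a R u := by
  set U := ENNReal.ofReal ⁻¹' Iio R
  have hU : IsOpen U := isOpen_Iio.preimage ENNReal.continuous_ofReal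
  have h0 : (0 : ℝ) ∈ odeDom R := ⟨le_rfl, by simpa using hR⟩
  have hderiv0 : HasDerivWithinAt u 0 (Ici 0) 0 := by
    have hev : u =ᶠ[𝓝[Ici 0] 0] fun x => a + radialPrimitive m (φ ∘ u) x :=
      Filter.mem_of_superset (inter_mem_nhdsWithin _ (hU.mem_nhds h0.2)) hu
    simpa using ((hasDerivAt_radialPrimitive hm hψ 0).const_add a).hasDerivWithinAt
      |>.congr_of_eventuallyEq hev (hu h0)
  refine ⟨((contDiffOn_const.add (contDiffOn_radialPrimitive hm hψ)).mono
      inter_subset_left).congr hu, hu0, by simpa [radialPrimitive] using hu h0,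
    hderiv0.derivWithin (uniqueDiffOn_Ici 0 0 self_mem_Ici), fun r hr hrR => ?_⟩
  refine deriv_deriv_add_mul_deriv_eq_of_eventuallyEq (a := a) hm hψ hr ?_
  exact Filter.mem_of_superset (inter_mem (hU.mem_nhds hrR) (Ioi_mem_nhds hr))
    fun x hx => hu ⟨le_of_lt hx.2, hx.1⟩

end Radial

theorem le_maxRadius_of_isSolOn {m a : ℝ} {φ u : ℝ → ℝ} {R : ℝ≥0∞} (hR : 0 < R)
    (hu : IsSolOn m φ a R u) : R ≤ maxRadius m φ a :=
  le_sSup ⟨hR, u, hu⟩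

theorem maxRadius_tendsto_top_general
    (m : ℝ) (hm : 2 < m)
    (φ : ℝ → ℝ) (hφ0 : φ 0 = 0)
    (hφnonneg : ∀ t : ℝ, 0 ≤ t → 0 ≤ φ t)
    (hφlip : ∀ x ∈ Set.Ici (0 : ℝ), ∃ K : NNReal, ∃ s ∈ nhdsWithin x (Set.Ici 0),
      LipschitzOnWith K φ s)
 :
    ∀ M : ℝ, 0 < M → ∃ δ : ℝ, 0 < δ ∧
      ∀ ρ : ℝ, 0 < ρ → ρ < δ → ENNReal.ofReal M < maxRadius m φ ρ := by
  intro M hM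
  obtain ⟨K, s, hs, hlip⟩ := hφlip 0 self_mem_Ici
  obtain ⟨ε, hε, hεs⟩ := mem_nhdsGE_iff_exists_Icc_subset.1 hs
  have hL : 0 < M + 1 := by linarith
  refine ⟨ε / exp (K / m * (M + 1) ^ 2 / 2), by positivity, fun ρ hρ hρδ => ?_⟩
  obtain ⟨u, hψ, hu0, hu⟩ := exists_eqOn_add_radialPrimitive (by linarith) hφ0
    (fun t ht => hφnonneg t ht.1) (hlip.mono hεs) hL.le hρ.le ((lt_div_iff₀ (exp_pos _)).1 hρδ).le
  have hdom : odeDom (ENNReal.ofReal (M + 1)) ⊆ Icc 0 (M + 1) := fun r hr =>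
    ⟨hr.1, ((ENNReal.ofReal_lt_ofReal_iff hL).1 hr.2).le⟩
  have hsol : IsSolOn m φ ρ (ENNReal.ofReal (M + 1)) u :=
    isSolOn_of_eqOn_add_radialPrimitive (by linarith) (by simpa using hL) hψ (fun r _ => hu0 r)
      (hu.mono hdom)
  calc ENNReal.ofReal M < ENNReal.ofReal (M + 1) :=
        (ENNReal.ofReal_lt_ofReal_iff hL).2 (by linarith)
    _ ≤ maxRadius m φ ρ := le_maxRadius_of_isSolOn (by simpa using hL) hsol

/-- the maximal existence radius tends to ∞ as the initial value tends to 0⁺. -/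
theorem maxRadius_tendsto_top
    (m : ℝ) (hm : 2 < m)
    (φ : ℝ → ℝ) (hφ0 : φ 0 = 0)
    (hφmono : MonotoneOn φ (Set.Ici 0))
    (hφnonneg : ∀ t : ℝ, 0 ≤ t → 0 ≤ φ t)
    (hφlip : ∀ x ∈ Set.Ici (0 : ℝ), ∃ K : NNReal, ∃ s ∈ nhdsWithin x (Set.Ici 0),
      LipschitzOnWith K φ s)
 :
    ∀ M : ℝ, 0 < M → ∃ δ : ℝ, 0 < δ ∧
      ∀ ρ : ℝ, 0 < ρ → ρ < δ → ENNReal.ofReal M < maxRadius m φ ρ :=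
  maxRadius_tendsto_top_general m hm φ hφ0 hφnonneg hφlip
end
end

section
/- Let φ : [0,∞) → [0,∞) be locally Lipschitz, nondecreasing, with φ(0) = 0, and assume there exists a constant a > 0 such that ∫_a^∞ dt/√(∫_0^t φ(s) ds) < ∞ (with the convention that the integrand equals +∞ where ∫_0^t φ(s) ds = 0). Then lim_{ρ→∞} ∫_ρ^∞ dt/√(∫_ρ^t φ(s) ds) = 0. -/
open MeasureTheory Real Filter Set
open scoped ENNReal Topology

/-! Write `F t = ∫₀ᵗ φ`. Monotonicity of `φ` gives `(t - ρ) φ(ρ) ≤ ∫_ρ^t φ` and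
`F(ρ) ≤ ρ φ(ρ) ≤ ∫_ρ^{2ρ} φ`. On `(ρ, 2ρ]` the first bound makes the shifted integral at most
`2 √ρ / √φ(ρ) ≤ 2ρ / √F(ρ) ≤ 4 ∫_{ρ/2}^ρ dt / √F(t)`; on `(2ρ, ∞)` the second gives
`F(t) ≤ 2 ∫_ρ^t φ`. So the shifted integral is bounded by tails of the convergent integral
`∫ dt / √F(t)`, and these tend to `0`. -/

theorem tendsto_setLIntegral_Ioi_atTop_zero {μ : Measure ℝ} {f : ℝ → ℝ≥0∞} {a : ℝ}
    (h : ∫⁻ t in Ioi a, f t ∂μ ≠ ∞) :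
    Tendsto (fun x => ∫⁻ t in Ioi x, f t ∂μ) atTop (𝓝 0) := by
  -- a finite measure whose values on `Ioi x`, `x ≥ a`, are the tails (`f` need not be measurable)
  set ν := (μ.restrict (Ioi a)).withDensity f
  have hν : ∀ x, a ≤ x → ν (Ioi x) = ∫⁻ t in Ioi x, f t ∂μ := fun x hx => by
    rw [withDensity_apply _ measurableSet_Ioi, Measure.restrict_restrict measurableSet_Ioi,
      Ioi_inter_Ioi, sup_eq_left.mpr hx]
  have hempty : ⋂ x : ℝ, Ioi x = ∅ :=
    eq_empty_of_forall_notMem fun t ht => lt_irrefl t (mem_iInter.mp ht t)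
  have hν0 := tendsto_measure_iInter_atTop (μ := ν)
    (fun _ => measurableSet_Ioi.nullMeasurableSet) antitone_Ioi ⟨a, by rwa [hν a le_rfl]⟩
  rw [hempty, measure_empty] at hν0
  exact hν0.congr' ((eventually_ge_atTop a).mono hν)

theorem inv_sqrt_eqOn_rpow : EqOn (fun u : ℝ => (√u)⁻¹) (fun u => u ^ (-(1 / 2) : ℝ)) (Ici 0) :=
  fun u hu => by simp only [Real.rpow_neg (mem_Ici.mp hu), Real.sqrt_eq_rpow]

theorem intervalIntegrable_inv_sqrt {c : ℝ} (hc : 0 ≤ c) :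
    IntervalIntegrable (fun u => (√u)⁻¹) volume 0 c :=
  (intervalIntegral.intervalIntegrable_rpow' (by norm_num)).congr
    (inv_sqrt_eqOn_rpow.mono fun _ hu => by
      rw [uIoc_of_le hc] at hu; exact mem_Ici.mpr hu.1.le).symm

theorem integral_inv_sqrt {c : ℝ} (hc : 0 ≤ c) : ∫ u in (0)..c, (√u)⁻¹ = 2 * √c := by
  rw [intervalIntegral.integral_congr (inv_sqrt_eqOn_rpow.mono fun _ hu => by
      rw [uIcc_of_le hc] at hu; exact hu.1),
    integral_rpow (Or.inl (by norm_num)), Real.zero_rpow (by norm_num), Real.sqrt_eq_rpow]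
  norm_num
  ring

/-- `1 / √x` in `[0, ∞]`, with the convention `1 / √0 = ∞` (and hence `∞` for all `x ≤ 0`). -/
noncomputable def invSqrt (x : ℝ) : ℝ≥0∞ := (ENNReal.ofReal √x)⁻¹

theorem invSqrt_antitone : Antitone invSqrt := fun _ _ h =>
  ENNReal.inv_le_inv.mpr (ENNReal.ofReal_le_ofReal (Real.sqrt_le_sqrt h))

theorem measurable_invSqrt : Measurable invSqrt := by
  unfold invSqrt; fun_prop

theorem invSqrt_of_pos {x : ℝ} (hx : 0 < x) : invSqrt x = ENNReal.ofReal (√x)⁻¹ :=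
  (ENNReal.ofReal_inv_of_pos (Real.sqrt_pos.mpr hx)).symm

theorem invSqrt_mul {x : ℝ} (hx : 0 ≤ x) (y : ℝ) : invSqrt (x * y) = invSqrt x * invSqrt y := by
  rw [invSqrt, invSqrt, invSqrt, Real.sqrt_mul hx, ENNReal.ofReal_mul (Real.sqrt_nonneg x),
    ENNReal.mul_inv (Or.inr ENNReal.ofReal_ne_top) (Or.inl ENNReal.ofReal_ne_top)]

theorem invSqrt_le_two_mul {x y : ℝ} (h : x ≤ 4 * y) : invSqrt y ≤ 2 * invSqrt x := by
  have hsqrt : ENNReal.ofReal √x ≤ ENNReal.ofReal √y * 2 := calc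
    ENNReal.ofReal √x ≤ ENNReal.ofReal √(4 * y) := ENNReal.ofReal_le_ofReal (Real.sqrt_le_sqrt h)
    _ = ENNReal.ofReal √y * 2 := by
      rw [Real.sqrt_mul (by norm_num), show √(4 : ℝ) = 2 by
          rw [show (4 : ℝ) = 2 ^ 2 by norm_num, Real.sqrt_sq (by norm_num)],
        ENNReal.ofReal_mul (by norm_num), ENNReal.ofReal_ofNat, mul_comm]
  rw [invSqrt, invSqrt, ← div_eq_mul_inv, ← ENNReal.inv_div (by simp) (by simp)]
  exact ENNReal.inv_le_inv.mpr (ENNReal.div_le_of_le_mul hsqrt)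

theorem lintegral_Ioc_invSqrt_sub {a b : ℝ} (hab : a ≤ b) :
    ∫⁻ t in Ioc a b, invSqrt (t - a) = ENNReal.ofReal (2 * √(b - a)) := by
  have hint : IntegrableOn (fun t => (√(t - a))⁻¹) (Ioc a b) := by
    have := (intervalIntegrable_inv_sqrt (sub_nonneg.mpr hab)).comp_sub_right a
    simp only [zero_add, sub_add_cancel] at this
    exact (intervalIntegrable_iff_integrableOn_Ioc_of_le hab).mp this
  rw [setLIntegral_congr_fun measurableSet_Ioc (fun t ht => invSqrt_of_pos (sub_pos.mpr ht.1)),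
    ← ofReal_integral_eq_lintegral_ofReal hint (ae_of_all _ fun t => by positivity),
    ← intervalIntegral.integral_of_le hab,
    intervalIntegral.integral_comp_sub_right (fun u => (√u)⁻¹), sub_self,
    integral_inv_sqrt (sub_nonneg.mpr hab)]

theorem MonotoneOn.sub_mul_le_intervalIntegral {φ : ℝ → ℝ} {a b : ℝ} (hab : a ≤ b)
    (hφ : MonotoneOn φ (Icc a b)) : (b - a) * φ a ≤ ∫ s in a..b, φ s := by
  have h := intervalIntegral.integral_mono_on (μ := volume) hab intervalIntegrable_const
    (hφ.mono (uIcc_of_le hab).subset).intervalIntegrable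
    fun x hx => hφ (left_mem_Icc.mpr hab) hx hx.1
  simpa [mul_comm] using h

theorem MonotoneOn.intervalIntegral_le_sub_mul {φ : ℝ → ℝ} {a b : ℝ} (hab : a ≤ b)
    (hφ : MonotoneOn φ (Icc a b)) : ∫ s in a..b, φ s ≤ (b - a) * φ b := by
  have h := intervalIntegral.integral_mono_on (μ := volume) hab
    (hφ.mono (uIcc_of_le hab).subset).intervalIntegrable intervalIntegrable_const
    fun x hx => hφ hx (right_mem_Icc.mpr hab) hx.2
  simpa [mul_comm] using h

section NonnegMonotone

variable {φ : ℝ → ℝ} (hmono : MonotoneOn φ (Ici 0)) (hnonneg : ∀ t, 0 ≤ t → 0 ≤ φ t)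
include hmono

theorem intervalIntegrable_of_monotoneOn_Ici {c d : ℝ} (hc : 0 ≤ c) (hd : 0 ≤ d) :
    IntervalIntegrable φ volume c d :=
  (hmono.mono fun _ hx => le_trans (le_min hc hd) hx.1).intervalIntegrable

include hnonneg

theorem intervalIntegral_zero_le_two_mul {ρ t : ℝ} (hρ : 0 ≤ ρ) (ht : 2 * ρ ≤ t) :
    ∫ s in (0)..t, φ s ≤ 2 * ∫ s in ρ..t, φ s := by
  have hint : ∀ {c d : ℝ}, 0 ≤ c → 0 ≤ d → IntervalIntegrable φ volume c d :=
    intervalIntegrable_of_monotoneOn_Ici hmono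
  have hsplit := intervalIntegral.integral_add_adjacent_intervals
    (hint le_rfl hρ) (hint hρ (by linarith))
  have hsplit' := intervalIntegral.integral_add_adjacent_intervals
    (hint hρ (by linarith : 0 ≤ 2 * ρ)) (hint (by linarith) (by linarith : 0 ≤ t))
  have hhead : ∫ s in (0)..ρ, φ s ≤ ρ * φ ρ := by
    simpa using (hmono.mono Icc_subset_Ici_self).intervalIntegral_le_sub_mul hρ
  have hmid : ρ * φ ρ ≤ ∫ s in ρ..(2 * ρ), φ s := by
    have := (hmono.mono fun _ hx => hρ.trans hx.1).sub_mul_le_intervalIntegral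
      (show ρ ≤ 2 * ρ by linarith)
    rwa [show 2 * ρ - ρ = ρ by ring] at this
  have htail : 0 ≤ ∫ s in (2 * ρ)..t, φ s :=
    intervalIntegral.integral_nonneg ht fun x hx => hnonneg x (by linarith [hx.1])
  linarith

theorem lintegral_Ioc_invSqrt_intervalIntegral_le {ρ : ℝ} (hρ : 0 < ρ) :
    ∫⁻ t in Ioc ρ (2 * ρ), invSqrt (∫ s in ρ..t, φ s) ≤
      4 * ∫⁻ t in Ioc (ρ / 2) ρ, invSqrt (∫ s in (0)..t, φ s) := by
  have hcoef : ENNReal.ofReal (2 * √ρ) = 4 * ENNReal.ofReal (ρ / 2) * invSqrt ρ := by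
    rw [invSqrt_of_pos hρ, ← ENNReal.ofReal_ofNat 4, ← ENNReal.ofReal_mul (by norm_num),
      ← ENNReal.ofReal_mul (by positivity)]
    congr 1
    have hs : 0 < √ρ := Real.sqrt_pos.mpr hρ
    field_simp
    nlinarith [Real.mul_self_sqrt hρ.le]
  calc ∫⁻ t in Ioc ρ (2 * ρ), invSqrt (∫ s in ρ..t, φ s)
      ≤ ∫⁻ t in Ioc ρ (2 * ρ), invSqrt (t - ρ) * invSqrt (φ ρ) :=
        setLIntegral_mono' measurableSet_Ioc fun t ht => by
          rw [← invSqrt_mul (sub_nonneg.mpr ht.1.le)]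
          exact invSqrt_antitone ((hmono.mono fun _ hx => hρ.le.trans hx.1)
            |>.sub_mul_le_intervalIntegral ht.1.le)
    _ = 4 * (ENNReal.ofReal (ρ / 2) * invSqrt (ρ * φ ρ)) := by
        have hmeas : Measurable fun t => invSqrt (t - ρ) :=
          measurable_invSqrt.comp (measurable_sub_const ρ)
        rw [lintegral_mul_const _ hmeas,
          lintegral_Ioc_invSqrt_sub (by linarith), show 2 * ρ - ρ = ρ by ring, hcoef,
          invSqrt_mul hρ.le]
        ring
    _ ≤ 4 * (ENNReal.ofReal (ρ / 2) * invSqrt (∫ s in (0)..ρ, φ s)) := by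
        gcongr
        apply invSqrt_antitone
        simpa using (hmono.mono Icc_subset_Ici_self).intervalIntegral_le_sub_mul hρ.le
    _ = 4 * ∫⁻ _ in Ioc (ρ / 2) ρ, invSqrt (∫ s in (0)..ρ, φ s) := by
        rw [setLIntegral_const, Real.volume_Ioc, show ρ - ρ / 2 = ρ / 2 by ring, mul_comm
          (ENNReal.ofReal _)]
    _ ≤ 4 * ∫⁻ t in Ioc (ρ / 2) ρ, invSqrt (∫ s in (0)..t, φ s) := by
        gcongr 4 * ?_
        refine setLIntegral_mono' measurableSet_Ioc fun t ht => invSqrt_antitone ?_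
        exact intervalIntegral.integral_mono_interval le_rfl (by linarith [ht.1]) ht.2
          ((ae_restrict_iff' measurableSet_Ioc).mpr (ae_of_all _ fun x hx => hnonneg x hx.1.le))
          (intervalIntegrable_of_monotoneOn_Ici hmono le_rfl hρ.le)

theorem lintegral_Ioi_invSqrt_intervalIntegral_le {ρ : ℝ} (hρ : 0 < ρ) :
    ∫⁻ t in Ioi ρ, invSqrt (∫ s in ρ..t, φ s) ≤
      4 * (∫⁻ t in Ioi (ρ / 2), invSqrt (∫ s in (0)..t, φ s)) +
        2 * ∫⁻ t in Ioi (2 * ρ), invSqrt (∫ s in (0)..t, φ s) := by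
  rw [← Ioc_union_Ioi_eq_Ioi (by linarith : ρ ≤ 2 * ρ),
    lintegral_union measurableSet_Ioi (Ioc_disjoint_Ioi le_rfl)]
  gcongr ?_ + ?_
  · refine (lintegral_Ioc_invSqrt_intervalIntegral_le hmono hnonneg hρ).trans ?_
    gcongr 4 * ?_
    exact lintegral_mono_set Ioc_subset_Ioi_self
  · rw [← lintegral_const_mul' _ _ ENNReal.ofNat_ne_top]
    refine setLIntegral_mono' measurableSet_Ioi fun t ht => invSqrt_le_two_mul ?_
    have hnn : 0 ≤ ∫ s in ρ..t, φ s :=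
      intervalIntegral.integral_nonneg (by linarith [mem_Ioi.mp ht])
        fun x hx => hnonneg x (hρ.le.trans hx.1)
    linarith [intervalIntegral_zero_le_two_mul hmono hnonneg hρ.le (le_of_lt ht)]

end NonnegMonotone

theorem ko_integral_tendsto_zero_general
    (φ : ℝ → ℝ)
    (hφmono : MonotoneOn φ (Set.Ici 0))
    (hφnonneg : ∀ t : ℝ, 0 ≤ t → 0 ≤ φ t)
    (hKO : ∃ a : ℝ, 0 < a ∧
      ∫⁻ t in Set.Ioi a, (ENNReal.ofReal (Real.sqrt (∫ s in (0:ℝ)..t, φ s)))⁻¹ < ⊤) :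
    Tendsto (fun ρ : ℝ => ∫⁻ t in Set.Ioi ρ,
        (ENNReal.ofReal (Real.sqrt (∫ s in ρ..t, φ s)))⁻¹)
      atTop (nhds 0) := by
  change Tendsto (fun ρ => ∫⁻ t in Ioi ρ, invSqrt (∫ s in ρ..t, φ s)) atTop (𝓝 0)
  obtain ⟨a, -, hfin⟩ := hKO
  have hT : Tendsto (fun x => ∫⁻ t in Ioi x, invSqrt (∫ s in (0)..t, φ s)) atTop (𝓝 0) :=
    tendsto_setLIntegral_Ioi_atTop_zero hfin.ne
  have hbound : Tendsto (fun ρ => 4 * (∫⁻ t in Ioi (ρ / 2), invSqrt (∫ s in (0)..t, φ s)) +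
      2 * ∫⁻ t in Ioi (2 * ρ), invSqrt (∫ s in (0)..t, φ s)) atTop (𝓝 0) := by
    simpa using (ENNReal.Tendsto.const_mul (hT.comp (tendsto_id.atTop_div_const two_pos))
      (Or.inr ENNReal.ofNat_ne_top)).add (ENNReal.Tendsto.const_mul
        (hT.comp (tendsto_id.const_mul_atTop two_pos)) (Or.inr ENNReal.ofNat_ne_top))
  refine tendsto_of_tendsto_of_tendsto_of_le_of_le' tendsto_const_nhds hbound
    (Eventually.of_forall fun _ => zero_le) ?_
  filter_upwards [eventually_gt_atTop 0] with ρ hρ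
    using lintegral_Ioi_invSqrt_intervalIntegral_le hφmono hφnonneg hρ

/-- under the finiteness condition, the shifted Keller--Osserman integral
tends to 0 at ∞. -/
theorem ko_integral_tendsto_zero
    (φ : ℝ → ℝ) (hφ0 : φ 0 = 0)
    (hφmono : MonotoneOn φ (Set.Ici 0))
    (hφnonneg : ∀ t : ℝ, 0 ≤ t → 0 ≤ φ t)
    (hφlip : ∀ x ∈ Set.Ici (0 : ℝ), ∃ K : NNReal, ∃ s ∈ nhdsWithin x (Set.Ici 0),
      LipschitzOnWith K φ s)
    (hKO : ∃ a : ℝ, 0 < a ∧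
      ∫⁻ t in Set.Ioi a, (ENNReal.ofReal (Real.sqrt (∫ s in (0:ℝ)..t, φ s)))⁻¹ < ⊤) :
    Tendsto (fun ρ : ℝ => ∫⁻ t in Set.Ioi ρ,
        (ENNReal.ofReal (Real.sqrt (∫ s in ρ..t, φ s)))⁻¹)
      atTop (nhds 0) :=
  ko_integral_tendsto_zero_general φ hφmono hφnonneg hKO
end
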